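/- arXiv:2006.05254 — 2 statements merged into one kernel-verified Lean document; each statement's English description precedes it below -/
import Mathlib

section
/- Let f : ℝ → ℝ be 1-Lipschitz, m_f-piecewise linear, and convex (or concave). Then there exists a GroupSort neural network of grouping size 2 satisfying Assumption 1 that represents f exactly, with depth ⌈log₂(m_f)⌉ + 1 and size at most 3m_f − 1. -/
open Matrix

/-- A GroupSort feedforward neural network with grouping size `k`, input dimension `d`
and real output.  `depth` is the number of affine layers (`q` in the paper), so there are
`depth - 1` hidden layers of widths `width 1, …, width (depth - 1)` (each divisible by `k`),
with `width 0 = d` (input) and `width depth = 1` (output). -/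
structure GroupSortNet (k d : ℕ) where
  depth : ℕ
  depth_pos : 1 ≤ depth
  width : ℕ → ℕ
  width_in : width 0 = d
  width_out : width depth = 1
  width_div : ∀ i, 1 ≤ i → i ≤ depth - 1 → k ∣ width i
  V : (i : ℕ) → Matrix (Fin (width (i + 1))) (Fin (width i)) ℝ
  c : (i : ℕ) → Fin (width (i + 1)) → ℝ

/-- The GroupSort activation with grouping size `k`: the coordinates are split into
consecutive groups of `k` elements and each group is sorted in decreasing order. -/
noncomputable def groupSortFun (k : ℕ) {ν : ℕ} (x : Fin ν → ℝ) : Fin ν → ℝ := fun i =>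
  if hk : 0 < k then
    let grp : Fin k → ℝ := fun j =>
      if h : ((i : ℕ) / k) * k + (j : ℕ) < ν then x ⟨((i : ℕ) / k) * k + (j : ℕ), h⟩ else 0
    (grp ∘ Tuple.sort grp)
      ⟨k - 1 - (i : ℕ) % k, lt_of_le_of_lt (Nat.sub_le _ _) (Nat.sub_lt hk Nat.one_pos)⟩
  else x i

/-- Output of the hidden layers: `post x i` is the (activated) output of layer `i`. -/
noncomputable def GroupSortNet.post {k d : ℕ} (N : GroupSortNet k d) (x : Fin d → ℝ) :
    (i : ℕ) → Fin (N.width i) → ℝ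
  | 0 => fun j => x (Fin.cast N.width_in j)
  | i + 1 => groupSortFun k (N.V i *ᵥ N.post x i + N.c i)

/-- The real-valued function computed by the network (no activation after the last
affine layer). -/
noncomputable def GroupSortNet.eval {k d : ℕ} (N : GroupSortNet k d) (x : Fin d → ℝ) : ℝ :=
  (N.V (N.depth - 1) *ᵥ N.post x (N.depth - 1) + N.c (N.depth - 1))
    ⟨0, by
      have h : N.depth - 1 + 1 = N.depth := Nat.succ_pred_eq_of_pos N.depth_pos
      rw [h, N.width_out]
      exact Nat.one_pos⟩

/-- The size of the network: the sum of the widths of the hidden layers. -/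
def GroupSortNet.size {k d : ℕ} (N : GroupSortNet k d) : ℕ :=
  ∑ i ∈ Finset.Icc 1 (N.depth - 1), N.width i

/-- Assumption 1: `‖V₁‖_{2,∞} ≤ 1` (every row of `V₁` has Euclidean norm at most `1`),
`‖V_i‖_∞ ≤ 1` for `i = 2, …, q` (every row has `ℓ¹`-norm at most `1`), and all offsets
are bounded by some constant `K₂ ≥ 0`. -/
def GroupSortNet.Assumption1 {k d : ℕ} (N : GroupSortNet k d) : Prop :=
  (∀ r, ∑ j, (N.V 0 r j) ^ 2 ≤ 1) ∧
  (∀ i, 1 ≤ i → i < N.depth → ∀ r, ∑ j, |N.V i r j| ≤ 1) ∧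
  (∃ K₂ : ℝ, 0 ≤ K₂ ∧ ∀ i, i < N.depth → ∀ r, |N.c i r| ≤ K₂)

/-- A (possibly unbounded, possibly partly open) polyhedral set: a finite intersection of
(strict or non-strict) affine half-spaces. -/
def IsPolyhedralSet {d : ℕ} (S : Set (Fin d → ℝ)) : Prop :=
  ∃ (n : ℕ) (a : Fin n → Fin d → ℝ) (b : Fin n → ℝ) (strict : Fin n → Bool),
    S = {x | ∀ i, if strict i then ∑ j, a i j * x j < b i else ∑ j, a i j * x j ≤ b i}

/-- `f` is a continuous `m`-piecewise linear function on `ℝ^d` with pieces `Ω` and affine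
functions `x ↦ ⟨a i, x⟩ + b i`. -/
def IsPWLWith {d : ℕ} (f : (Fin d → ℝ) → ℝ) (m : ℕ)
    (Ω : Fin m → Set (Fin d → ℝ)) (a : Fin m → Fin d → ℝ) (b : Fin m → ℝ) : Prop :=
  Continuous f ∧
  (∀ i, IsPolyhedralSet (Ω i)) ∧
  (∀ i j, i ≠ j → Disjoint (Ω i) (Ω j)) ∧
  (⋃ i, Ω i) = Set.univ ∧
  (∀ i, ∀ x ∈ Ω i, f x = ∑ j, a i j * x j + b i)

/-- There is a partition of `ℝ^d` into `M` polyhedral sets, refining the partition `Ω`,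
on each of which no difference `ℓ_i - ℓ_j` of two affine pieces changes sign. -/
def IsSignRefinement {d : ℕ} (m : ℕ) (Ω : Fin m → Set (Fin d → ℝ))
    (a : Fin m → Fin d → ℝ) (b : Fin m → ℝ) (M : ℕ) : Prop :=
  ∃ Ω' : Fin M → Set (Fin d → ℝ),
    (∀ p, IsPolyhedralSet (Ω' p)) ∧
    (∀ p q, p ≠ q → Disjoint (Ω' p) (Ω' q)) ∧
    (⋃ p, Ω' p) = Set.univ ∧
    (∀ p, ∃ i, Ω' p ⊆ Ω i) ∧
    (∀ p : Fin M, ∀ i j : Fin m,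
      (∀ x ∈ Ω' p, ∑ t, a i t * x t + b i ≤ ∑ t, a j t * x t + b j) ∨
      (∀ x ∈ Ω' p, ∑ t, a j t * x t + b j ≤ ∑ t, a i t * x t + b i))

/-- `f : ℝ → ℝ` is a continuous `m`-piecewise linear function: `ℝ` is partitioned into
`m` intervals on the `i`-th of which `f x = a i * x + b i`. -/
def IsPWLRealWith (f : ℝ → ℝ) (m : ℕ) (I : Fin m → Set ℝ) (a b : Fin m → ℝ) : Prop :=
  Continuous f ∧
  (∀ i, (I i).OrdConnected) ∧
  (∀ i j, i ≠ j → Disjoint (I i) (I j)) ∧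
  (⋃ i, I i) = Set.univ ∧
  (∀ i, ∀ x ∈ I i, f x = a i * x + b i)

def IsPWLReal (f : ℝ → ℝ) (m : ℕ) : Prop :=
  ∃ I a b, IsPWLRealWith f m I a b

/-!
A convex piecewise linear function is the pointwise maximum of the affine functions of its
nondegenerate pieces: each of them lies below `f` by convexity and has slope at most `1` by the
Lipschitz bound, and equality, clear on the nondegenerate pieces, extends to the finitely many
remaining points by density and continuity.

A maximum of `m` numbers is computed by a binary tournament. GroupSort with groups of size `2`
puts the maximum of each pair at the even coordinate of the pair, and a `0/1` selection matrix
feeds these maxima, padded by repetition, to the next layer. Level `i` has `⌈m / 2 ^ i⌉` nodes,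
so one value is left after `⌈log₂ m⌉` hidden layers, and the widths `2 ⌈m / 2 ^ i⌉` add up to at
most `3m - 3`. The concave case is the convex one for `-f`, with output weight `-1`.
-/

open Set

lemma ConvexOn.affine_le_of_eqOn_Icc {f : ℝ → ℝ} (hf : ConvexOn ℝ univ f) {a b u v : ℝ}
    (huv : u < v) (hfuv : EqOn f (fun y => a * y + b) (Icc u v)) (x : ℝ) : a * x + b ≤ f x := by
  have hu : f u = a * u + b := hfuv (left_mem_Icc.2 huv.le)
  have hv : f v = a * v + b := hfuv (right_mem_Icc.2 huv.le)
  have hslope : (f v - f u) / (v - u) = a := by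
    rw [hu, hv, div_eq_iff (sub_ne_zero.2 huv.ne')]; ring
  rcases lt_or_ge x u with hxu | hux
  · have h := hf.slope_mono_adjacent (mem_univ x) (mem_univ v) hxu huv
    rw [hslope, div_le_iff₀ (sub_pos.2 hxu)] at h
    linarith
  rcases le_or_gt x v with hxv | hvx
  · exact (hfuv ⟨hux, hxv⟩).ge
  · have h := hf.slope_mono_adjacent (mem_univ u) (mem_univ x) huv hvx
    rw [hslope, le_div_iff₀ (sub_pos.2 hvx)] at h
    linarith

lemma LipschitzWith.abs_le_of_eq_affine {f : ℝ → ℝ} {K : NNReal} (hf : LipschitzWith K f)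
    {a b u v : ℝ} (huv : u ≠ v) (hu : f u = a * u + b) (hv : f v = a * v + b) : |a| ≤ K := by
  have h := hf.dist_le_mul u v
  rw [Real.dist_eq, Real.dist_eq, hu, hv, show a * u + b - (a * v + b) = a * (u - v) by ring,
    abs_mul] at h
  exact le_of_mul_le_mul_right h (abs_pos.2 (sub_ne_zero.2 huv))

lemma IsPWLReal.neg {f : ℝ → ℝ} {m : ℕ} (hf : IsPWLReal f m) : IsPWLReal (-f) m := by
  obtain ⟨I, a, b, hcont, hconn, hdisj, hcover, hpiece⟩ := hf
  refine ⟨I, -a, -b, hcont.neg, hconn, hdisj, hcover, fun i x hx => ?_⟩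
  simp only [Pi.neg_apply, hpiece i x hx]
  ring

namespace IsPWLRealWith

variable {f : ℝ → ℝ} {m : ℕ} {I : Fin m → Set ℝ} {a b : Fin m → ℝ}

lemma exists_nontrivial (h : IsPWLRealWith f m I a b) : ∃ i, (I i).Nontrivial := by
  obtain ⟨-, -, -, hcover, -⟩ := h
  by_contra! hI
  refine infinite_univ (α := ℝ) ?_
  rw [← hcover]
  exact finite_iUnion fun i => (hI i).finite

lemma dense_iUnion_nontrivial (h : IsPWLRealWith f m I a b) :
    Dense (⋃ (i) (_ : (I i).Nontrivial), I i) := by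
  obtain ⟨-, -, -, hcover, -⟩ := h
  have hfin : (⋃ (i) (_ : (I i).Subsingleton), I i).Finite :=
    finite_iUnion fun i => finite_iUnion fun hi => hi.finite
  refine (hfin.countable.dense_compl ℝ).mono fun x hx => ?_
  obtain ⟨i, hi⟩ := mem_iUnion.1 (hcover ▸ mem_univ x : x ∈ ⋃ i, I i)
  by_cases hI : (I i).Nontrivial
  · exact mem_iUnion₂.2 ⟨i, hI, hi⟩
  · exact absurd (mem_iUnion₂.2 ⟨i, not_nontrivial_iff.1 hI, hi⟩) hx

lemma exists_lt_eqOn_of_nontrivial (h : IsPWLRealWith f m I a b) {i : Fin m}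
    (hi : (I i).Nontrivial) : ∃ u v, u < v ∧ EqOn f (fun y => a i * y + b i) (Icc u v) := by
  obtain ⟨-, hconn, -, -, hpiece⟩ := h
  obtain ⟨u, hu, v, hv, huv⟩ := hi
  rcases huv.lt_or_gt with huv | huv
  · exact ⟨u, v, huv, fun y hy => hpiece i y ((hconn i).out hu hv hy)⟩
  · exact ⟨v, u, huv, fun y hy => hpiece i y ((hconn i).out hv hu hy)⟩

end IsPWLRealWith

theorem IsPWLReal.exists_isGreatest_affine_of_convexOn {f : ℝ → ℝ} {m : ℕ} {K : NNReal}
    (hf : IsPWLReal f m) (hconv : ConvexOn ℝ univ f) (hlip : LipschitzWith K f) :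
    ∃ α β : Fin m → ℝ, (∀ t, |α t| ≤ K) ∧
      ∀ x, IsGreatest (range fun t => α t * x + β t) (f x) := by
  classical
  obtain ⟨I, a, b, h⟩ := hf
  obtain ⟨hcont, -, -, -, hpiece⟩ := id h
  obtain ⟨i₀, hi₀⟩ := h.exists_nontrivial
  set g : Fin m → Fin m := fun t => if (I t).Nontrivial then t else i₀
  have hg : ∀ t, (I (g t)).Nontrivial := fun t => by
    by_cases ht : (I t).Nontrivial <;> simp [g, ht, hi₀]
  have hg_eq : ∀ t, (I t).Nontrivial → g t = t := fun t ht => if_pos ht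
  refine ⟨a ∘ g, b ∘ g, fun t => ?_, fun x => ⟨?_, ?_⟩⟩
  · obtain ⟨u, v, huv, hfuv⟩ := h.exists_lt_eqOn_of_nontrivial (hg t)
    exact hlip.abs_le_of_eq_affine huv.ne (hfuv (left_mem_Icc.2 huv.le))
      (hfuv (right_mem_Icc.2 huv.le))
  · have hclosed : IsClosed {x | ∃ t, a (g t) * x + b (g t) = f x} := by
      simp only [ofPred_exists]
      exact isClosed_iUnion_of_finite fun t => isClosed_eq (by fun_prop) hcont
    have hsub : (⋃ (i) (_ : (I i).Nontrivial), I i) ⊆ {x | ∃ t, a (g t) * x + b (g t) = f x} := by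
      simp only [iUnion_subset_iff]
      intro i hi y hy
      exact ⟨i, by rw [hg_eq i hi, hpiece i y hy]⟩
    exact closure_minimal hsub hclosed (h.dense_iUnion_nontrivial.closure_eq ▸ mem_univ x)
  · rintro _ ⟨t, rfl⟩
    obtain ⟨u, v, huv, hfuv⟩ := h.exists_lt_eqOn_of_nontrivial (hg t)
    exact hconv.affine_le_of_eqOn_Icc huv hfuv x

lemma Tuple.comp_sort_one_eq_max {α : Type*} [LinearOrder α] (g : Fin 2 → α) :
    g (Tuple.sort g 1) = max (g 0) (g 1) := by
  have hmono : g (Tuple.sort g 0) ≤ g (Tuple.sort g 1) := Tuple.monotone_sort g (by decide)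
  have hne := (Tuple.sort g).injective.ne (show (0 : Fin 2) ≠ 1 by decide)
  generalize Tuple.sort g 0 = p, Tuple.sort g 1 = q at hmono hne ⊢
  fin_cases p <;> fin_cases q <;> simp_all

lemma groupSortFun_two_apply_two_mul {ν k : ℕ} (y : Fin ν → ℝ) (h : 2 * k + 1 < ν) :
    groupSortFun 2 y ⟨2 * k, by omega⟩ = max (y ⟨2 * k, by omega⟩) (y ⟨2 * k + 1, h⟩) := by
  simp only [groupSortFun, Nat.ofNat_pos, ↓reduceDIte]
  set g : Fin 2 → ℝ := fun j => if hj : 2 * k / 2 * 2 + (j : ℕ) < ν then y ⟨_, hj⟩ else 0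
  have hg0 : g 0 = y ⟨2 * k, by omega⟩ := by
    simp only [g, Fin.val_zero]; rw [dif_pos (by omega)]; congr 2; omega
  have hg1 : g 1 = y ⟨2 * k + 1, h⟩ := by
    simp only [g, Fin.val_one]; rw [dif_pos (by omega)]; congr 2; omega
  have hidx : (⟨2 - 1 - 2 * k % 2, by omega⟩ : Fin 2) = 1 := Fin.ext (by simp)
  rw [Function.comp_apply, hidx, Tuple.comp_sort_one_eq_max g, hg0, hg1]

lemma max_eq_of_isGreatest_range {α : Type*} [LinearOrder α] {ν k : ℕ} {z : Fin ν → α} {M : α}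
    (hz : IsGreatest (range z) M) {j : Fin ν} (hj : z j = M) (hk : (j : ℕ) / 2 = k)
    (h : 2 * k + 1 < ν) : max (z ⟨2 * k, by omega⟩) (z ⟨2 * k + 1, h⟩) = M := by
  refine le_antisymm (max_le (hz.2 ⟨_, rfl⟩) (hz.2 ⟨_, rfl⟩)) (hj ▸ ?_)
  rcases (show (j : ℕ) = 2 * k ∨ (j : ℕ) = 2 * k + 1 by omega) with hj' | hj'
  · exact (congrArg z (Fin.ext hj')).le.trans (le_max_left _ _)
  · exact (congrArg z (Fin.ext hj')).le.trans (le_max_right _ _)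

lemma Fin.sum_ite_val_eq {M : Type*} [AddCommMonoid M] {n K : ℕ} (hK : K < n) (g : Fin n → M) :
    ∑ c : Fin n, (if (c : ℕ) = K then g c else 0) = g ⟨K, hK⟩ := by
  have hval : ∀ c : Fin n, ((c : ℕ) = K) = (c = ⟨K, hK⟩) := fun c => by simp [Fin.ext_iff]
  simp only [hval, Finset.sum_ite_eq', Finset.mem_univ, if_true]

namespace GroupSortNet

variable {k d : ℕ} (N : GroupSortNet k d) (x : Fin d → ℝ)

noncomputable def preact (i : ℕ) : Fin (N.width (i + 1)) → ℝ := N.V i *ᵥ N.post x i + N.c i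

lemma post_succ (i : ℕ) : N.post x (i + 1) = groupSortFun k (N.preact x i) := rfl

end GroupSortNet

namespace MaxTreeNet

def numNodes (m i : ℕ) : ℕ := (fun k => (k + 1) / 2)^[i] m

lemma numNodes_succ (m i : ℕ) : numNodes m (i + 1) = (numNodes m i + 1) / 2 :=
  Function.iterate_succ_apply' _ _ _

lemma numNodes_succ' (m i : ℕ) : numNodes m (i + 1) = numNodes ((m + 1) / 2) i :=
  Function.iterate_succ_apply _ _ _

lemma numNodes_pos {m : ℕ} (hm : 0 < m) (i : ℕ) : 0 < numNodes m i := by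
  induction i with
  | zero => exact hm
  | succ i ih => rw [numNodes_succ]; omega

lemma numNodes_clog {m : ℕ} (hm : 0 < m) : numNodes m (Nat.clog 2 m) = 1 := by
  induction m using Nat.strong_induction_on with
  | _ m ih =>
    rcases (show m = 1 ∨ 2 ≤ m by omega) with rfl | hm2
    · rfl
    · rw [Nat.clog_of_two_le one_lt_two hm2, numNodes_succ']
      exact ih _ (by omega) (by omega)

lemma two_mul_sum_numNodes_le {m : ℕ} (hm : 0 < m) :
    2 * ∑ i ∈ Finset.range (Nat.clog 2 m), numNodes m (i + 1) ≤ 3 * m - 3 := by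
  induction m using Nat.strong_induction_on with
  | _ m ih =>
    rcases (show m = 1 ∨ 2 ≤ m by omega) with rfl | hm2
    · simp
    · have := ih ((m + 1) / 2) (by omega) (by omega)
      rw [Nat.clog_of_two_le one_lt_two hm2, Finset.sum_range_succ']
      simp only [numNodes_succ' m, show (m + 2 - 1) / 2 = (m + 1) / 2 by omega]
      have h0 : numNodes ((m + 1) / 2) 0 = (m + 1) / 2 := rfl
      omega

def layerWidth (m i : ℕ) : ℕ := if i = 0 ∨ Nat.clog 2 m < i then 1 else 2 * numNodes m i

lemma layerWidth_of_le {m i : ℕ} (h1 : 1 ≤ i) (h2 : i ≤ Nat.clog 2 m) :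
    layerWidth m i = 2 * numNodes m i :=
  if_neg (by omega)

variable {m : ℕ} [NeZero m]

def weight (α : Fin m → ℝ) (ε : ℝ) (i : ℕ) :
    Matrix (Fin (layerWidth m (i + 1))) (Fin (layerWidth m i)) ℝ :=
  Matrix.of fun j c =>
    if i = 0 then α (Fin.ofNat m j)
    else if (c : ℕ) = 2 * (j % numNodes m i) then (if i = Nat.clog 2 m then ε else 1) else 0

def bias (β : Fin m → ℝ) (i : ℕ) : Fin (layerWidth m (i + 1)) → ℝ :=
  fun j => if i = 0 then β (Fin.ofNat m j) else 0

end MaxTreeNet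

open MaxTreeNet in
def maxTreeNet {m : ℕ} [NeZero m] (α β : Fin m → ℝ) (ε : ℝ) : GroupSortNet 2 1 where
  depth := Nat.clog 2 m + 1
  depth_pos := Nat.le_add_left 1 _
  width := layerWidth m
  width_in := rfl
  width_out := if_pos (Or.inr (Nat.lt_succ_self _))
  width_div i h1 h2 := by rw [layerWidth_of_le h1 (by omega)]; exact dvd_mul_right 2 _
  V := weight α ε
  c := bias β

namespace MaxTreeNet

variable {m : ℕ} [NeZero m] {α β : Fin m → ℝ} {ε x : ℝ}

lemma width_maxTreeNet_of_le {i : ℕ} (h1 : 1 ≤ i) (h2 : i ≤ Nat.clog 2 m) :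
    (maxTreeNet α β ε).width i = 2 * numNodes m i :=
  layerWidth_of_le h1 h2

lemma preact_zero_apply (j : Fin ((maxTreeNet α β ε).width 1)) :
    (maxTreeNet α β ε).preact (fun _ => x) 0 j = α (Fin.ofNat m j) * x + β (Fin.ofNat m j) := by
  change (∑ _c : Fin 1, α (Fin.ofNat m j) * x) + β (Fin.ofNat m j) = _
  rw [Fin.sum_univ_one]

lemma preact_succ_apply {i : ℕ} (j : Fin ((maxTreeNet α β ε).width (i + 2))) {k : ℕ}
    (hk : (j : ℕ) % numNodes m (i + 1) = k) (h : 2 * k + 1 < (maxTreeNet α β ε).width (i + 1)) :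
    (maxTreeNet α β ε).preact (fun _ => x) (i + 1) j =
      (if i + 1 = Nat.clog 2 m then ε else 1) *
        max ((maxTreeNet α β ε).preact (fun _ => x) i ⟨2 * k, by omega⟩)
          ((maxTreeNet α β ε).preact (fun _ => x) i ⟨2 * k + 1, h⟩) := by
  rw [← groupSortFun_two_apply_two_mul, ← GroupSortNet.post_succ]
  change (∑ c : Fin ((maxTreeNet α β ε).width (i + 1)),
    (if (c : ℕ) = 2 * (j % numNodes m (i + 1)) then
      (if i + 1 = Nat.clog 2 m then ε else 1) else 0) * _) + 0 = _
  generalize (if i + 1 = Nat.clog 2 m then ε else 1) = s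
  simp only [add_zero, ite_mul, zero_mul, hk]
  exact Fin.sum_ite_val_eq (Nat.lt_of_succ_lt h) _

lemma isGreatest_range_preact {M : ℝ} (hM : IsGreatest (range fun t => α t * x + β t) M)
    {i : ℕ} (hi : i < Nat.clog 2 m) :
    IsGreatest (range ((maxTreeNet α β ε).preact (fun _ => x) i)) M := by
  induction i with
  | zero =>
    refine ⟨?_, ?_⟩
    · obtain ⟨t, ht⟩ := hM.1
      have ht' : (t : ℕ) < (maxTreeNet α β ε).width 1 := by
        rw [width_maxTreeNet_of_le le_rfl hi, show numNodes m 1 = (m + 1) / 2 from rfl]; omega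
      refine ⟨⟨t, ht'⟩, ?_⟩
      rw [preact_zero_apply, ← ht]
      simp
    · rintro _ ⟨j, rfl⟩
      rw [preact_zero_apply]
      exact hM.2 ⟨_, rfl⟩
  | succ i ih =>
    have ih := ih (by omega)
    have hpos := numNodes_pos (NeZero.pos m) (i + 1)
    have hn : numNodes m (i + 2) = (numNodes m (i + 1) + 1) / 2 := numNodes_succ m (i + 1)
    have hw : (maxTreeNet α β ε).width (i + 1) = 2 * numNodes m (i + 1) :=
      width_maxTreeNet_of_le (by omega) (by omega)
    refine ⟨?_, ?_⟩
    · obtain ⟨j, hj⟩ := ih.1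
      have hjw := j.2
      have hj2 : (j : ℕ) / 2 < (maxTreeNet α β ε).width (i + 2) := by
        rw [width_maxTreeNet_of_le (i := i + 2) (by omega) hi]; omega
      refine ⟨⟨(j : ℕ) / 2, hj2⟩, ?_⟩
      rw [preact_succ_apply _ (k := (j : ℕ) / 2) (Nat.mod_eq_of_lt (by simp; omega))
        (by omega), if_neg (by omega), one_mul]
      exact max_eq_of_isGreatest_range ih hj rfl _
    · rintro _ ⟨j, rfl⟩
      rw [preact_succ_apply _ rfl (by have := Nat.mod_lt j hpos; omega), if_neg (by omega),
        one_mul]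
      exact max_le (ih.2 ⟨_, rfl⟩) (ih.2 ⟨_, rfl⟩)

theorem eval_maxTreeNet (hm : 2 ≤ m) {M : ℝ} (hM : IsGreatest (range fun t => α t * x + β t) M) :
    (maxTreeNet α β ε).eval (fun _ => x) = ε * M := by
  -- `eval` is entry `0` of `preact (depth - 1)`; generalizing `n` lets it be written `i + 1`
  have hlast : ∀ n, n = Nat.clog 2 m → ∀ h : 0 < (maxTreeNet α β ε).width (n + 1),
      (maxTreeNet α β ε).preact (fun _ => x) n ⟨0, h⟩ = ε * M := by
    rintro n hn -
    obtain ⟨i, rfl⟩ : ∃ i, n = i + 1 := ⟨n - 1, by have := Nat.clog_pos one_lt_two hm; omega⟩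
    have hw : (maxTreeNet α β ε).width (i + 1) = 2 := by
      rw [width_maxTreeNet_of_le (by omega) hn.le, hn, numNodes_clog (NeZero.pos m)]
    have hmax := isGreatest_range_preact (ε := ε) hM (i := i) (by omega)
    obtain ⟨j, hj⟩ := hmax.1
    rw [preact_succ_apply _ (Nat.zero_mod _) (by omega), if_pos hn,
      max_eq_of_isGreatest_range hmax hj (by have := j.2; omega)]
  exact hlast _ (Nat.add_sub_cancel _ _) _

theorem assumption1_maxTreeNet (hα : ∀ t, |α t| ≤ 1) (hε : |ε| ≤ 1) :
    (maxTreeNet α β ε).Assumption1 := by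
  refine ⟨fun r => ?_, fun i hi1 hi2 r => ?_, ⟨∑ t, |β t|, by positivity, fun i _ r => ?_⟩⟩
  · change ∑ _j : Fin 1, α (Fin.ofNat m r) ^ 2 ≤ 1
    rw [Fin.sum_univ_one, sq_le_one_iff_abs_le_one]
    exact hα _
  · change i < Nat.clog 2 m + 1 at hi2
    obtain ⟨i, rfl⟩ : ∃ i', i = i' + 1 := ⟨i - 1, by omega⟩
    have hw := layerWidth_of_le (m := m) hi1 (by omega)
    change ∑ c : Fin (layerWidth m (i + 1)),
      |if (c : ℕ) = 2 * (r % numNodes m (i + 1)) then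
        (if i + 1 = Nat.clog 2 m then ε else 1) else 0| ≤ 1
    simp only [apply_ite abs, abs_zero]
    rw [Fin.sum_ite_val_eq (by have := Nat.mod_lt r (numNodes_pos (NeZero.pos m) (i + 1)); omega)]
    split_ifs <;> simp [hε]
  · change |if i = 0 then β (Fin.ofNat m r) else 0| ≤ _
    split_ifs
    · exact Finset.single_le_sum (fun t _ => abs_nonneg (β t)) (Finset.mem_univ _)
    · simp only [abs_zero]; positivity

theorem size_maxTreeNet_le : (maxTreeNet α β ε).size ≤ 3 * m - 3 := by
  change ∑ i ∈ Finset.Icc 1 (Nat.clog 2 m), layerWidth m i ≤ _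
  rw [← Finset.Ico_add_one_right_eq_Icc, Finset.sum_Ico_eq_sum_range, Nat.add_sub_cancel]
  refine le_of_eq_of_le (Finset.sum_congr rfl fun i hi => ?_)
    ((Finset.mul_sum _ _ _).symm.trans_le (two_mul_sum_numNodes_le (NeZero.pos m)))
  rw [add_comm, layerWidth_of_le (by omega) (Finset.mem_range.1 hi)]

end MaxTreeNet

theorem exists_groupSortNet_eval_eq_mul_of_convexOn {f : ℝ → ℝ} {m : ℕ} (hm : 2 ≤ m)
    (hf : IsPWLReal f m) (hconv : ConvexOn ℝ univ f) (hlip : LipschitzWith 1 f) {ε : ℝ}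
    (hε : |ε| ≤ 1) :
    ∃ N : GroupSortNet 2 1, N.Assumption1 ∧ (∀ x : ℝ, N.eval (fun _ => x) = ε * f x) ∧
      N.depth = Nat.clog 2 m + 1 ∧ N.size ≤ 3 * m - 3 := by
  have : NeZero m := ⟨by omega⟩
  obtain ⟨α, β, hα, hmax⟩ := hf.exists_isGreatest_affine_of_convexOn hconv hlip
  exact ⟨maxTreeNet α β ε, MaxTreeNet.assumption1_maxTreeNet (by simpa using hα) hε,
    fun x => MaxTreeNet.eval_maxTreeNet hm (hmax x), rfl, MaxTreeNet.size_maxTreeNet_le⟩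

/-- Any `1`-Lipschitz `m`-piecewise linear convex (or concave) function `f : ℝ → ℝ` is
exactly represented by a GroupSort network of grouping size `2` satisfying Assumption 1,
with depth `⌈log₂ m⌉ + 1` and size at most `3m - 1`. -/
theorem groupSortNet_represents_pwl_real_convex (f : ℝ → ℝ) (hlip : LipschitzWith 1 f)
    (m : ℕ) (hm : 2 ≤ m) (hf : IsPWLReal f m)
    (hconv : ConvexOn ℝ Set.univ f ∨ ConcaveOn ℝ Set.univ f) :
    ∃ N : GroupSortNet 2 1, N.Assumption1 ∧ (∀ x : ℝ, N.eval (fun _ => x) = f x) ∧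
      N.depth = Nat.clog 2 m + 1 ∧
      N.size ≤ 3 * m - 1 := by
  have hsize : 3 * m - 3 ≤ 3 * m - 1 := Nat.sub_le_sub_left (by norm_num) _
  rcases hconv with hconv | hconc
  · obtain ⟨N, hN, heval, hdepth, hN_size⟩ :=
      exists_groupSortNet_eval_eq_mul_of_convexOn hm hf hconv hlip (ε := 1) (by norm_num)
    exact ⟨N, hN, fun x => by rw [heval, one_mul], hdepth, hN_size.trans hsize⟩
  · obtain ⟨N, hN, heval, hdepth, hN_size⟩ :=
      exists_groupSortNet_eval_eq_mul_of_convexOn hm hf.neg hconc.neg hlip.neg (ε := -1)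
        (by norm_num)
    exact ⟨N, hN, fun x => by rw [heval, Pi.neg_apply, neg_one_mul, neg_neg], hdepth,
      hN_size.trans hsize⟩
end

section
/- Let ε > 0 and f : [0,1] → ℝ be 1-Lipschitz. Then there exists a GroupSort neural network D of grouping size 2 satisfying Assumption 1 with sup_{x ∈ [0,1]} |f(x) − D(x)| ≤ ε, whose depth is 2⌈log₂(1/ε)⌉ + 1 and whose size is at most 3·4^{⌈log₂(1/ε)⌉} + 2^{⌈log₂(1/ε)⌉} − 1 (in particular O((1/ε)²)). -/
/-!
With `n = ⌈log₂(1/ε)⌉`, place `2ⁿ` grid points `a_j = (j + 1/2)/2ⁿ` in `[0,1]` and consider the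
lower envelope `g(x) = max_j (f(a_j) - |x - a_j|)`. Each cone lies below `f` because `f` is
`1`-Lipschitz, and the cone at the grid point nearest to `x` is at least `f(x) - 2⁻ⁿ`, so
`|f - g| ≤ 2⁻ⁿ ≤ ε`. A GroupSort network with groups of size `2` computes `g` exactly: sorting the
pair `f(a_j) ± (x - a_j)` puts the cone `f(a_j) - |x - a_j|` in the odd slot, and each further
layer feeds pairs of previous outputs into the next sort, whose even slot is their maximum; `n`
such layers evaluate the maximum as a binary tree, and `n - 1` copying layers bring the depth to
`2n + 1`. Beyond the first layer every row has at most one nonzero entry, equal to `1`, which gives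
Assumption 1.
-/

open Matrix

lemma comp_sort_fin_two {α : Type*} [LinearOrder α] (g : Fin 2 → α) :
    (g ∘ Tuple.sort g) 0 = min (g 0) (g 1) ∧ (g ∘ Tuple.sort g) 1 = max (g 0) (g 1) := by
  rcases le_total (g 0) (g 1) with h | h
  · have hsort : Tuple.sort g = Equiv.refl _ :=
      Tuple.sort_eq_refl_iff_monotone.2 <|
        Fin.monotone_iff_le_succ.2 fun i => by fin_cases i; exact h
    simp [hsort, h]
  · have hsort : g ∘ Tuple.sort g = g ∘ Equiv.swap 0 1 := by
      refine (Tuple.comp_sort_eq_comp_iff_monotone.2 ?_).symm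
      exact Fin.monotone_iff_le_succ.2 fun i => by fin_cases i; simpa using h
    rw [hsort]
    simp [h]

lemma groupSortFun_two_apply {ν : ℕ} (x : Fin ν → ℝ) (p : ℕ) (h : 2 * p + 1 < ν) :
    groupSortFun 2 x ⟨2 * p, by omega⟩ = max (x ⟨2 * p, by omega⟩) (x ⟨2 * p + 1, h⟩) ∧
    groupSortFun 2 x ⟨2 * p + 1, h⟩ = min (x ⟨2 * p, by omega⟩) (x ⟨2 * p + 1, h⟩) := by
  set g : Fin 2 → ℝ := ![x ⟨2 * p, by omega⟩, x ⟨2 * p + 1, h⟩]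
  have hg : ∀ q, q / 2 = p → (fun j : Fin 2 =>
      if h : (q / 2) * 2 + (j : ℕ) < ν then x ⟨(q / 2) * 2 + (j : ℕ), h⟩ else 0) = g := by
    intro q hq
    funext j
    fin_cases j <;> simp [g, hq, show p * 2 < ν by omega, show p * 2 + 1 < ν by omega, mul_comm]
  have hmod₀ : 2 * p % 2 = 0 := by omega
  have hmod₁ : (2 * p + 1) % 2 = 1 := by omega
  simp only [groupSortFun, dif_pos two_pos, hmod₀, hmod₁]
  rw [hg _ (by omega), hg _ (by omega)]
  exact (comp_sort_fin_two g).symm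

namespace GroupSortNet

section

variable {k d : ℕ} (N : GroupSortNet k d) (x : Fin d → ℝ)

noncomputable def pre (i : ℕ) : Fin (N.width (i + 1)) → ℝ :=
  N.V i *ᵥ N.post x i + N.c i

lemma pre_eq_post_of_row_eq_indicator {i : ℕ} (r : Fin (N.width (i + 1))) {t : ℕ}
    (ht : t < N.width i) (hV : ∀ j, N.V i r j = if (j : ℕ) = t then 1 else 0)
    (hc : N.c i r = 0) :
    N.pre x i r = N.post x i ⟨t, ht⟩ := by
  rw [pre, Pi.add_apply, hc, add_zero, mulVec, dotProduct, Finset.sum_eq_single ⟨t, ht⟩]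
  · simp [hV]
  · intro j _ hj
    simp [hV, Fin.val_ne_of_ne hj]
  · simp

lemma exists_bias_bound : ∃ K₂ : ℝ, 0 ≤ K₂ ∧ ∀ i, i < N.depth → ∀ r, |N.c i r| ≤ K₂ := by
  refine ⟨∑ i ∈ Finset.range N.depth, ∑ r, |N.c i r|, by positivity, fun i hi r => ?_⟩
  calc |N.c i r| ≤ ∑ r, |N.c i r| :=
        Finset.single_le_sum (f := fun r => |N.c i r|) (fun _ _ => abs_nonneg _)
          (Finset.mem_univ r)
    _ ≤ ∑ i ∈ Finset.range N.depth, ∑ r, |N.c i r| :=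
        Finset.single_le_sum (f := fun i => ∑ r, |N.c i r|) (fun _ _ => by positivity)
          (Finset.mem_range.2 hi)

end

section GroupSortTwo

variable {d : ℕ} (N : GroupSortNet 2 d) (x : Fin d → ℝ)

lemma post_succ_even {i p : ℕ} (h : 2 * p + 1 < N.width (i + 1)) :
    N.post x (i + 1) ⟨2 * p, by omega⟩ =
      max (N.pre x i ⟨2 * p, by omega⟩) (N.pre x i ⟨2 * p + 1, h⟩) :=
  (groupSortFun_two_apply _ p h).1

lemma post_succ_odd {i p : ℕ} (h : 2 * p + 1 < N.width (i + 1)) :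
    N.post x (i + 1) ⟨2 * p + 1, h⟩ =
      min (N.pre x i ⟨2 * p, by omega⟩) (N.pre x i ⟨2 * p + 1, h⟩) :=
  (groupSortFun_two_apply _ p h).2

end GroupSortTwo

end GroupSortNet

lemma sum_abs_indicator_le_one (m t : ℕ) :
    ∑ j : Fin m, |if (j : ℕ) = t then (1 : ℝ) else 0| ≤ 1 := by
  have hcard : (Finset.univ.filter fun j : Fin m => (j : ℕ) = t).card ≤ 1 :=
    Finset.card_le_one.2 fun a ha b hb => by simp at ha hb; omega
  simpa [apply_ite, Finset.sum_boole] using hcard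

def maxTree {α : Type*} [LinearOrder α] (h : ℕ → α) : ℕ → ℕ → α
  | 0, j => h j
  | s + 1, j => max (maxTree h s (2 * j)) (maxTree h s (2 * j + 1))

lemma maxTree_le {α : Type*} [LinearOrder α] {h : ℕ → α} {b : α} :
    ∀ {s j : ℕ}, (∀ k, k / 2 ^ s = j → h k ≤ b) → maxTree h s j ≤ b
  | 0, j, hb => hb j (by simp)
  | s + 1, j, hb => by
    refine max_le (maxTree_le fun k hk => hb k ?_) (maxTree_le fun k hk => hb k ?_) <;>
      rw [pow_succ, ← Nat.div_div_eq_div_mul, hk] <;> omega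

lemma le_maxTree {α : Type*} [LinearOrder α] (h : ℕ → α) (k : ℕ) :
    ∀ s, h k ≤ maxTree h s (k / 2 ^ s)
  | 0 => by simp [maxTree]
  | s + 1 => by
    have hk : k / 2 ^ s = 2 * (k / 2 ^ (s + 1)) ∨ k / 2 ^ s = 2 * (k / 2 ^ (s + 1)) + 1 := by
      rw [pow_succ, ← Nat.div_div_eq_div_mul]; omega
    rcases hk with hk | hk
    · exact (hk ▸ le_maxTree h k s).trans (le_max_left _ _)
    · exact (hk ▸ le_maxTree h k s).trans (le_max_right _ _)

lemma two_mul_add_one_lt_two_pow_sub {n l j : ℕ} (hl : l < n) (hj : j < 2 ^ (n - (l + 1))) :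
    2 * j + 1 < 2 ^ (n - l) := by
  rw [show n - l = n - (l + 1) + 1 by omega, pow_succ]
  omega

lemma two_mul_le_two_pow (n : ℕ) : 2 * n ≤ 2 ^ n := by
  cases n with
  | zero => simp
  | succ n =>
    have := Nat.lt_two_pow_self (n := n)
    rw [pow_succ]
    omega

lemma one_div_two_pow_ceil_logb_le {ε : ℝ} (hε : 0 < ε) :
    1 / 2 ^ ⌈Real.logb 2 (1 / ε)⌉₊ ≤ ε := by
  have h : 1 / ε ≤ 2 ^ ⌈Real.logb 2 (1 / ε)⌉₊ := by
    rw [← Real.rpow_natCast]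
    exact (Real.logb_le_iff_le_rpow one_lt_two (by positivity)).1 (Nat.le_ceil _)
  rw [div_le_iff₀ (by positivity)]
  rwa [div_le_iff₀ hε, mul_comm] at h

noncomputable def gridPoint (n j : ℕ) : ℝ := (j + 1 / 2) / 2 ^ n

lemma gridPoint_mem_Icc {n j : ℕ} (hj : j < 2 ^ n) : gridPoint n j ∈ Set.Icc (0 : ℝ) 1 := by
  have hj' : (j : ℝ) + 1 ≤ 2 ^ n := by exact_mod_cast hj
  refine ⟨by unfold gridPoint; positivity, ?_⟩
  rw [gridPoint, div_le_one (by positivity)]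
  linarith

lemma exists_gridPoint_near (n : ℕ) {x : ℝ} (hx : x ∈ Set.Icc (0 : ℝ) 1) :
    ∃ j < 2 ^ n, |x - gridPoint n j| ≤ 1 / 2 ^ (n + 1) := by
  set j := min ⌊x * 2 ^ n⌋₊ (2 ^ n - 1)
  have hpow : (0 : ℝ) < 2 ^ n := by positivity
  have hj_le : (j : ℝ) ≤ x * 2 ^ n :=
    (Nat.cast_le.2 (min_le_left _ _)).trans (Nat.floor_le (mul_nonneg hx.1 hpow.le))
  have hj_ge : x * 2 ^ n ≤ j + 1 := by
    rcases min_choice ⌊x * 2 ^ n⌋₊ (2 ^ n - 1) with hmin | hmin <;> rw [show j = _ from hmin]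
    · exact (Nat.lt_floor_add_one _).le
    · rw [Nat.cast_sub Nat.one_le_two_pow]
      push_cast
      nlinarith [hx.2]
  refine ⟨j, by have := Nat.one_le_two_pow (n := n); omega, ?_⟩
  calc |x - gridPoint n j| = |x * 2 ^ n - (j + 1 / 2)| / 2 ^ n := by
        rw [← abs_of_pos hpow, ← abs_div, abs_of_pos hpow, gridPoint]
        field_simp
    _ ≤ 1 / 2 / 2 ^ n := by
        gcongr
        rw [abs_le]
        constructor <;> linarith
    _ = 1 / 2 ^ (n + 1) := by
        rw [pow_succ]
        ring

noncomputable def gridCone (f : ℝ → ℝ) (n : ℕ) (x : ℝ) (j : ℕ) : ℝ :=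
  f (gridPoint n j) - |x - gridPoint n j|

/-- Row `r` of layer `i ≥ 1` copies coordinate `selectIndex n i r` of the previous layer: the odd
slots (minima) after layer `1`, the even slots (maxima) up to the root of the tree, then slot `0`.
An out-of-range index gives a zero row. -/
def selectIndex (n i r : ℕ) : ℕ :=
  if i = 1 then 2 * r + 1 else if i ≤ n then 2 * r else 0

noncomputable def approxNet (f : ℝ → ℝ) (n : ℕ) : GroupSortNet 2 1 where
  depth := 2 * n + 1
  depth_pos := by omega
  width i := if i = 0 ∨ 2 * n + 1 ≤ i then 1 else 2 ^ (n + 1)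
  width_in := by simp
  width_out := by simp
  width_div i h₁ h₂ := by
    rw [if_neg (by omega), pow_succ]
    exact dvd_mul_left 2 _
  V i := of fun r j =>
    if i = 0 then (-1) ^ (r : ℕ) else if (j : ℕ) = selectIndex n i r then 1 else 0
  c i r := if i = 0 then f (gridPoint n (r / 2)) - (-1) ^ (r : ℕ) * gridPoint n (r / 2) else 0

section approxNet

variable (f : ℝ → ℝ) (n : ℕ) (x : ℝ)

lemma approxNet_width {i : ℕ} (h₁ : 1 ≤ i) (h₂ : i ≤ 2 * n) :
    (approxNet f n).width i = 2 * 2 ^ n :=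
  (if_neg (by omega)).trans (pow_succ' 2 n)

lemma approxNet_pre_zero (r : Fin ((approxNet f n).width 1)) :
    (approxNet f n).pre (fun _ => x) 0 r =
      f (gridPoint n (r / 2)) + (-1) ^ (r : ℕ) * (x - gridPoint n (r / 2)) := by
  have hV : ∀ j, (approxNet f n).V 0 r j * (approxNet f n).post (fun _ => x) 0 j =
      (-1) ^ (r : ℕ) * x := fun _ => rfl
  have hc : (approxNet f n).c 0 r =
      f (gridPoint n (r / 2)) - (-1) ^ (r : ℕ) * gridPoint n (r / 2) := rfl
  rw [GroupSortNet.pre, Pi.add_apply, mulVec, dotProduct, Finset.sum_congr rfl fun j _ => hV j,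
    Finset.sum_const, Finset.card_univ, Fintype.card_fin, (approxNet f n).width_in, hc]
  ring

lemma approxNet_pre_eq_post {i : ℕ} (hi : 1 ≤ i) (r : Fin ((approxNet f n).width (i + 1)))
    {t : ℕ} (hs : selectIndex n i r = t) (ht : t < (approxNet f n).width i) :
    (approxNet f n).pre (fun _ => x) i r = (approxNet f n).post (fun _ => x) i ⟨t, ht⟩ :=
  GroupSortNet.pre_eq_post_of_row_eq_indicator _ _ r ht
    (fun _ => (if_neg (by omega)).trans (by rw [hs])) (if_neg (by omega))

lemma approxNet_post_one {p : ℕ} (h : 2 * p + 1 < (approxNet f n).width 1) :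
    (approxNet f n).post (fun _ => x) 1 ⟨2 * p + 1, h⟩ = gridCone f n x p := by
  have hdiv₀ : 2 * p / 2 = p := by omega
  have hdiv₁ : (2 * p + 1) / 2 = p := by omega
  rw [GroupSortNet.post_succ_odd _ _ h, approxNet_pre_zero, approxNet_pre_zero]
  simp only [hdiv₀, hdiv₁, (even_two_mul p).neg_one_pow, (odd_two_mul_add_one p).neg_one_pow,
    one_mul, neg_one_mul, gridCone]
  rcases le_total 0 (x - gridPoint n p) with hd | hd
  · rw [abs_of_nonneg hd, min_eq_right (by linarith)]
    ring
  · rw [abs_of_nonpos hd, min_eq_left (by linarith)]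
    ring

lemma approxNet_post_succ_even {i : ℕ} (hi : 1 ≤ i) {j t₀ t₁ : ℕ}
    (h : 2 * j + 1 < (approxNet f n).width (i + 1))
    (hs₀ : selectIndex n i (2 * j) = t₀) (hs₁ : selectIndex n i (2 * j + 1) = t₁)
    (ht₀ : t₀ < (approxNet f n).width i) (ht₁ : t₁ < (approxNet f n).width i) :
    (approxNet f n).post (fun _ => x) (i + 1) ⟨2 * j, by omega⟩ =
      max ((approxNet f n).post (fun _ => x) i ⟨t₀, ht₀⟩)
        ((approxNet f n).post (fun _ => x) i ⟨t₁, ht₁⟩) := by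
  rw [GroupSortNet.post_succ_even _ _ h, approxNet_pre_eq_post f n x hi _ hs₀ ht₀,
    approxNet_pre_eq_post f n x hi _ hs₁ ht₁]

lemma approxNet_post_even (hn : 1 ≤ n) {i : ℕ} (hi₂ : 2 ≤ i) (hi : i ≤ 2 * n) {j : ℕ}
    (hj : j < 2 ^ (n - min (i - 1) n)) (h : 2 * j < (approxNet f n).width i) :
    (approxNet f n).post (fun _ => x) i ⟨2 * j, h⟩ =
      maxTree (gridCone f n x) (min (i - 1) n) j := by
  have hpow : ∀ s, 2 ^ (n - s) ≤ 2 ^ n := fun s => Nat.pow_le_pow_right two_pos (Nat.sub_le n s)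
  induction i, hi₂ using Nat.le_induction generalizing j with
  | base =>
    rw [show min (2 - 1) n = 0 + 1 by omega] at hj ⊢
    have hj' := two_mul_add_one_lt_two_pow_sub hn hj
    have := hpow 0
    have hw₁ := approxNet_width f n (i := 1) le_rfl (by omega)
    have hw₂ := approxNet_width f n (i := 1 + 1) (by omega) hi
    refine (approxNet_post_succ_even f n x le_rfl (j := j) (by omega) (if_pos rfl) (if_pos rfl)
      (by omega) (by omega)).trans ?_
    rw [approxNet_post_one, approxNet_post_one]
    rfl
  | succ i hi₂ ih =>
    have hw := approxNet_width f n (i := i) (by omega) (by omega)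
    have hw' := approxNet_width f n (i := i + 1) (by omega) hi
    by_cases hin : i ≤ n
    · have hsel : ∀ r, selectIndex n i r = 2 * r := fun r => by
        rw [selectIndex, if_neg (by omega), if_pos hin]
      rw [show min (i + 1 - 1) n = min (i - 1) n + 1 by omega] at hj ⊢
      have hj' := two_mul_add_one_lt_two_pow_sub (by omega) hj
      have := hpow (min (i - 1) n)
      refine (approxNet_post_succ_even f n x (by omega) (j := j) (by omega) (hsel _) (hsel _)
        (by omega) (by omega)).trans ?_
      rw [ih (by omega) (by omega), ih (by omega) hj']
      rfl
    · have hsel : ∀ r, selectIndex n i r = 2 * 0 := fun r => by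
        rw [selectIndex, if_neg (by omega), if_neg hin]
      rw [show min (i + 1 - 1) n = n by omega, Nat.sub_self, pow_zero, Nat.lt_one_iff] at hj
      subst hj
      refine (approxNet_post_succ_even f n x (by omega) (j := 0) (by omega) (hsel _) (hsel _)
        (by omega) (by omega)).trans ?_
      rw [max_self, ih (by omega) (by rw [show min (i - 1) n = n by omega]; simp)]
      congr 1
      omega

lemma approxNet_eval (hn : 1 ≤ n) :
    (approxNet f n).eval (fun _ => x) = maxTree (gridCone f n x) n 0 := by
  have hw : 0 < (approxNet f n).width (2 * n) := by
    rw [approxNet_width f n (by omega) le_rfl]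
    positivity
  have hsel : selectIndex n (2 * n) 0 = 2 * 0 := by
    rw [selectIndex, if_neg (by omega), if_neg (by omega)]
  calc (approxNet f n).eval (fun _ => x)
      = (approxNet f n).pre (fun _ => x) (2 * n) ⟨0, by simp [approxNet]⟩ := rfl
    _ = (approxNet f n).post (fun _ => x) (2 * n) ⟨2 * 0, hw⟩ :=
        approxNet_pre_eq_post f n x (by omega) _ hsel hw
    _ = maxTree (gridCone f n x) (min (2 * n - 1) n) 0 :=
        approxNet_post_even f n x hn (by omega) le_rfl (by simp) hw
    _ = maxTree (gridCone f n x) n 0 := by rw [show min (2 * n - 1) n = n by omega]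

lemma approxNet_assumption1 : (approxNet f n).Assumption1 := by
  refine ⟨fun r => ?_, fun i hi _ r => ?_, (approxNet f n).exists_bias_bound⟩
  · have hV : ∀ j, ((approxNet f n).V 0 r j) ^ 2 = 1 := fun j => by
      change ((-1 : ℝ) ^ (r : ℕ)) ^ 2 = 1
      rw [← pow_mul, mul_comm, pow_mul, neg_one_sq, one_pow]
    simp [hV, (approxNet f n).width_in]
  · have hV : ∀ j, (approxNet f n).V i r j = if (j : ℕ) = selectIndex n i r then 1 else 0 :=
      fun _ => if_neg (by omega)
    simpa only [hV] using sum_abs_indicator_le_one _ _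

lemma approxNet_size_le : (approxNet f n).size ≤ 3 * 4 ^ n + 2 ^ n - 1 := by
  have hsize : (approxNet f n).size = 2 * n * (2 * 2 ^ n) := by
    change ∑ i ∈ Finset.Icc 1 (2 * n), _ = _
    rw [Finset.sum_congr rfl fun i hi => approxNet_width f n
      (Finset.mem_Icc.1 hi).1 (Finset.mem_Icc.1 hi).2, Finset.sum_const, Nat.card_Icc,
      smul_eq_mul, Nat.add_sub_cancel]
  have := Nat.one_le_two_pow (n := n)
  calc (approxNet f n).size = 2 * n * (2 * 2 ^ n) := hsize
    _ ≤ 2 ^ n * (2 * 2 ^ n) := Nat.mul_le_mul_right _ (two_mul_le_two_pow n)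
    _ = 2 * 4 ^ n := by rw [show (4 : ℕ) = 2 * 2 from rfl, mul_pow]; ring
    _ ≤ 3 * 4 ^ n + 2 ^ n - 1 := by omega

lemma abs_sub_approxNet_eval_le
    (hlip : ∀ x ∈ Set.Icc (0 : ℝ) 1, ∀ y ∈ Set.Icc (0 : ℝ) 1, |f x - f y| ≤ |x - y|)
    (hx : x ∈ Set.Icc (0 : ℝ) 1) :
    |f x - (approxNet f n).eval (fun _ => x)| ≤ 1 / 2 ^ n := by
  obtain ⟨j, hj, hdist⟩ := exists_gridPoint_near n hx
  have hfj := hlip x hx _ (gridPoint_mem_Icc hj)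
  have hpow : (2 : ℝ) * (1 / 2 ^ (n + 1)) = 1 / 2 ^ n := by rw [pow_succ]; field_simp
  rcases Nat.eq_zero_or_pos n with rfl | hn
  · obtain rfl : j = 0 := by simpa using hj
    have heval := approxNet_pre_zero f 0 x ⟨0, by simp [approxNet]⟩
    change (approxNet f 0).eval _ = _ at heval
    rw [heval, abs_le]
    simp only [Nat.zero_div, pow_zero, one_mul] at hdist hfj ⊢
    constructor <;> linarith [abs_le.1 hfj, le_abs_self (x - gridPoint 0 0),
      neg_abs_le (x - gridPoint 0 0)]
  · have hupper : (approxNet f n).eval (fun _ => x) ≤ f x := by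
      rw [approxNet_eval f n x hn]
      refine maxTree_le fun k hk => ?_
      have hk' := hlip x hx _ (gridPoint_mem_Icc (Nat.div_eq_zero_iff_lt (by positivity) |>.1 hk))
      rw [gridCone]
      linarith [neg_le_abs (f x - f (gridPoint n k))]
    have hlower : f x - 1 / 2 ^ n ≤ (approxNet f n).eval (fun _ => x) := by
      rw [approxNet_eval f n x hn]
      refine le_trans ?_ ((le_maxTree (gridCone f n x) j n).trans_eq (by rw [Nat.div_eq_of_lt hj]))
      rw [gridCone]
      linarith [le_abs_self (f x - f (gridPoint n j))]
    rw [abs_le]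
    constructor <;> linarith

end approxNet

/-- Approximation of `1`-Lipschitz functions on `[0,1]` by GroupSort networks of grouping
size `2` satisfying Assumption 1: with `n = ⌈log₂(1/ε)⌉`, the network has depth `2n + 1`
and size at most `3 ⬝ 4^n + 2^n - 1` (in particular `O((1/ε)²)`). -/
theorem groupSortNet_approx_lipschitz_real (ε : ℝ) (hε : 0 < ε) (f : ℝ → ℝ)
    (hlip : ∀ x ∈ Set.Icc (0 : ℝ) 1, ∀ y ∈ Set.Icc (0 : ℝ) 1, |f x - f y| ≤ |x - y|) :
    ∃ N : GroupSortNet 2 1, N.Assumption1 ∧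
      (∀ x ∈ Set.Icc (0 : ℝ) 1, |f x - N.eval (fun _ => x)| ≤ ε) ∧
      N.depth = 2 * ⌈Real.logb 2 (1 / ε)⌉₊ + 1 ∧
      N.size ≤ 3 * 4 ^ ⌈Real.logb 2 (1 / ε)⌉₊ + 2 ^ ⌈Real.logb 2 (1 / ε)⌉₊ - 1 :=
  ⟨approxNet f _, approxNet_assumption1 f _,
    fun x hx => (abs_sub_approxNet_eval_le f _ x hlip hx).trans (one_div_two_pow_ceil_logb_le hε),
    rfl, approxNet_size_le f _⟩
end
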